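/- arXiv:1401.1423 — 5 statements merged into one kernel-verified Lean document; each statement's English description precedes it below -/
import Mathlib

section
/- Let d ≥ 2 and let f : [N]^d → ℝ be any kernel. For every q = 1, …, d−1, the L²-norm of the contraction f ⌢_q f is at least the L²-norm of the star contraction f ⋆_{q+1}^{q} f, i.e. ‖f ⌢_q f‖ ≥ ‖f ⋆_{q+1}^{q} f‖. -/
open Finset

/-- Concatenation of two index tuples, with a cast of the length. -/
def appFn {N a b c : ℕ} (h : a + b = c) (t : Fin a → Fin N) (u : Fin b → Fin N) :
    Fin c → Fin N := fun p => Fin.append t u (Fin.cast h.symm p)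

lemma appFn_apply {N a b c : ℕ} (h : a + b = c) (t : Fin a → Fin N) (u : Fin b → Fin N)
    (p : Fin c) :
    appFn h t u p = if hc : (p : ℕ) < a then t ⟨p, hc⟩ else u ⟨p - a, by omega⟩ := by
  unfold appFn Fin.append Fin.addCases
  split <;> simp only [eq_rec_constant]
  · rw [dif_pos] <;> rfl
  · rw [dif_neg] <;> first | rfl | assumption

lemma cons_apply {N q : ℕ} (γ : Fin N) (i : Fin q → Fin N) (j : Fin (q + 1)) :
    (Fin.cons γ i : Fin (q+1) → Fin N) j
      = if hc : (j : ℕ) = 0 then γ else i ⟨j - 1, by omega⟩ := by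
  rcases j with ⟨jv, hj⟩
  cases jv with
  | zero => rfl
  | succ n =>
    have : (⟨n+1, hj⟩ : Fin (q+1)) = Fin.succ ⟨n, by omega⟩ := rfl
    rw [this, Fin.cons_succ]
    simp

lemma snoc_apply {N q : ℕ} (u : Fin q → Fin N) (γ : Fin N) (j : Fin (q + 1)) :
    (Fin.snoc u γ : Fin (q+1) → Fin N) j
      = if hc : (j : ℕ) < q then u ⟨j, hc⟩ else γ := by
  unfold Fin.snoc
  split <;> rfl

lemma keyA {d N q : ℕ} (hq : q + 1 ≤ d)
    (h1 : (d - q) + q = d) (h3 : (d - (q + 1)) + (q + 1) = d)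
    (hm : (d - (q + 1)) + 1 = d - q)
    (t : Fin (d - (q+1)) → Fin N) (γ : Fin N) (i : Fin q → Fin N) :
    appFn h3 t (Fin.cons γ i) = appFn h1 (appFn hm t (fun _ : Fin 1 => γ)) i := by
  funext p
  simp only [appFn_apply, cons_apply, snoc_apply, Fin.val_mk]
  split_ifs <;>
    first
      | rfl
      | omega
      | (exact congrArg _ (Fin.ext (by simp only [Fin.val_mk]; omega)))

lemma keyB {d N q : ℕ} (hq : q + 1 ≤ d)
    (h2 : q + (d - q) = d) (h4 : (q + 1) + (d - (q + 1)) = d)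
    (hm' : 1 + (d - (q + 1)) = d - q)
    (v : Fin q → Fin N) (γ : Fin N) (s : Fin (d - (q+1)) → Fin N) :
    appFn h4 (Fin.snoc v γ) s = appFn h2 v (appFn hm' (fun _ : Fin 1 => γ) s) := by
  funext p
  simp only [appFn_apply, cons_apply, snoc_apply, Fin.val_mk]
  split_ifs <;>
    first
      | rfl
      | omega
      | (exact congrArg _ (Fin.ext (by simp only [Fin.val_mk]; omega)))

/-- Lemma "stimacontr", first inequality: for any kernel `f : [N]^d → ℝ` and
`1 ≤ q ≤ d-1`, the norm of the contraction `f ⌢_q f` dominates the norm of the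
star contraction `f ⋆_{q+1}^{q} f`. -/
theorem stmt0 (d N q : ℕ) (hd : 2 ≤ d) (hq1 : 1 ≤ q) (hq2 : q ≤ d - 1)
    (f : (Fin d → Fin N) → ℝ)
    (h1 : (d - q) + q = d) (h2 : q + (d - q) = d)
    (h3 : (d - (q + 1)) + (q + 1) = d) (h4 : (q + 1) + (d - (q + 1)) = d) :
    Real.sqrt (∑ t : Fin (d - q) → Fin N, ∑ s : Fin (d - q) → Fin N,
        (∑ i : Fin q → Fin N,
          f (appFn h1 t i) * f (appFn h2 (i ∘ Fin.rev) s)) ^ 2)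
    ≥ Real.sqrt (∑ t : Fin (d - (q + 1)) → Fin N, ∑ γ : Fin N,
        ∑ s : Fin (d - (q + 1)) → Fin N,
        (∑ i : Fin q → Fin N,
          f (appFn h3 t (Fin.cons γ i)) *
            f (appFn h4 (Fin.snoc (i ∘ Fin.rev) γ) s)) ^ 2) := by
  have hq : q + 1 ≤ d := by omega
  have hm : (d - (q + 1)) + 1 = d - q := by omega
  have hm' : 1 + (d - (q + 1)) = d - q := by omega
  rw [ge_iff_le]
  apply Real.sqrt_le_sqrt
  set g : ((Fin (d - q) → Fin N) × (Fin (d - q) → Fin N)) → ℝ :=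
    fun x => (∑ i : Fin q → Fin N,
      f (appFn h1 x.1 i) * f (appFn h2 (i ∘ Fin.rev) x.2)) ^ 2 with hg
  set e : ((Fin (d - (q+1)) → Fin N) × Fin N × (Fin (d - (q+1)) → Fin N)) →
      ((Fin (d - q) → Fin N) × (Fin (d - q) → Fin N)) :=
    fun x => (appFn hm x.1 (fun _ : Fin 1 => x.2.1),
              appFn hm' (fun _ : Fin 1 => x.2.1) x.2.2) with he
  have hinj : Function.Injective e := by
    rintro ⟨t, γ, s⟩ ⟨t', γ', s'⟩ hx
    simp only [he, Prod.mk.injEq] at hx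
    obtain ⟨hA, hB⟩ := hx
    have hγ : γ = γ' := by
      have := congrFun hA ⟨d - (q+1), by omega⟩
      rwa [appFn_apply, appFn_apply, dif_neg (by simp), dif_neg (by simp)] at this
    have ht : t = t' := by
      funext j
      have := congrFun hA ⟨(j : ℕ), by omega⟩
      rwa [appFn_apply, appFn_apply, dif_pos (by exact j.isLt), dif_pos (by exact j.isLt)] at this
    have hs : s = s' := by
      funext j
      have := congrFun hB ⟨(j : ℕ) + 1, by omega⟩
      rwa [appFn_apply, appFn_apply, dif_neg (by simp), dif_neg (by simp)] at this
    simp [ht, hγ, hs]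
  calc
    ∑ t : Fin (d - (q + 1)) → Fin N, ∑ γ : Fin N, ∑ s : Fin (d - (q + 1)) → Fin N,
        (∑ i : Fin q → Fin N,
          f (appFn h3 t (Fin.cons γ i)) *
            f (appFn h4 (Fin.snoc (i ∘ Fin.rev) γ) s)) ^ 2
      = ∑ x : ((Fin (d - (q+1)) → Fin N) × Fin N × (Fin (d - (q+1)) → Fin N)),
          g (e x) := by
        rw [Fintype.sum_prod_type]
        refine Finset.sum_congr rfl fun t _ => ?_
        rw [Fintype.sum_prod_type]
        refine Finset.sum_congr rfl fun γ _ => Finset.sum_congr rfl fun s _ => ?_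
        simp only [hg, he]
        congr 1
        refine Finset.sum_congr rfl fun i _ => ?_
        rw [keyA hq h1 h3 hm, keyB hq h2 h4 hm']
    _ = ∑ y ∈ Finset.image e Finset.univ, g y := by
        rw [Finset.sum_image (fun a _ b _ hab => hinj hab)]
    _ ≤ ∑ y : ((Fin (d - q) → Fin N) × (Fin (d - q) → Fin N)), g y := by
        refine Finset.sum_le_sum_of_subset_of_nonneg (Finset.subset_univ _)
          fun y _ _ => sq_nonneg _
    _ = ∑ t : Fin (d - q) → Fin N, ∑ s : Fin (d - q) → Fin N,
        (∑ i : Fin q → Fin N,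
          f (appFn h1 t i) * f (appFn h2 (i ∘ Fin.rev) s)) ^ 2 := by
        rw [Fintype.sum_prod_type]
end

section
/- Let d > 2 and let f : [N]^d → ℝ be a symmetric kernel vanishing on diagonals. Then ‖f ⌢_{d−1} f‖ ≥ (1/d)·max_{i∈[N]} Inf_i(f), where Inf_i(f) = d · Σ_{j_2,…,j_d∈[N]} f(i,j_2,…,j_d)² is the i-th influence of f. -/
open Finset

lemma appFn_rev {d N : ℕ} (h1 : 1 + (d - 1) = d) (h2 : (d - 1) + 1 = d)
    (i : Fin N) (j : Fin (d-1) → Fin N) :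
    appFn h2 (j ∘ Fin.rev) (fun _ : Fin 1 => i)
      = (appFn h1 (fun _ : Fin 1 => i) j) ∘ (Fin.rev : Fin d → Fin d) := by
  funext p
  simp only [appFn, Fin.append, Fin.addCases, Function.comp, eq_rec_constant, Fin.coe_cast,
    Fin.rev]
  split_ifs with ha hb hb
  · exfalso; omega
  · congr 1
    apply Fin.ext
    simp [Fin.castLT, Fin.subNat, Fin.rev]
    omega
  · rfl
  · exfalso; omega

/-- For `d > 2` and `f : [N]^d → ℝ` symmetric and vanishing on diagonals,
`‖f ⌢_{d-1} f‖ ≥ (1/d)·Inf_i(f)` for every `i` (hence `≥ (1/d)·max_i Inf_i(f)`),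
where `Inf_i(f) = d · Σ_{j ∈ [N]^{d-1}} f(i,j)²`. -/
theorem stmt2 (d N : ℕ) (hd : 2 < d) (f : (Fin d → Fin N) → ℝ)
    (hsym : ∀ (σ : Equiv.Perm (Fin d)) (v : Fin d → Fin N), f (v ∘ σ) = f v)
    (hvan : ∀ v : Fin d → Fin N, ¬ Function.Injective v → f v = 0)
    (h1 : 1 + (d - 1) = d) (h2 : (d - 1) + 1 = d) :
    ∀ i : Fin N,
      Real.sqrt (∑ t : Fin N, ∑ s : Fin N,
          (∑ j : Fin (d - 1) → Fin N,
            f (appFn h1 (fun _ : Fin 1 => t) j) *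
              f (appFn h2 (j ∘ Fin.rev) (fun _ : Fin 1 => s))) ^ 2)
      ≥ (1 / (d : ℝ)) *
          ((d : ℝ) * ∑ j : Fin (d - 1) → Fin N,
            (f (appFn h1 (fun _ : Fin 1 => i) j)) ^ 2) := by
  intro i
  have hd0 : (d : ℝ) ≠ 0 := by positivity
  set S : ℝ := ∑ j : Fin (d - 1) → Fin N, (f (appFn h1 (fun _ : Fin 1 => i) j)) ^ 2 with hS
  have hSnn : 0 ≤ S := Finset.sum_nonneg fun _ _ => sq_nonneg _
  have hRHS : (1 / (d : ℝ)) * ((d : ℝ) * S) = S := by field_simp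
  rw [hRHS]
  have hdiag : (∑ j : Fin (d - 1) → Fin N,
      f (appFn h1 (fun _ : Fin 1 => i) j) *
        f (appFn h2 (j ∘ Fin.rev) (fun _ : Fin 1 => i))) = S := by
    rw [hS]
    refine Finset.sum_congr rfl fun j _ => ?_
    rw [appFn_rev h1 h2 i j]
    have := hsym Fin.revPerm (appFn h1 (fun _ : Fin 1 => i) j)
    simp only [Fin.revPerm, Equiv.coe_fn_mk] at this
    rw [show ((appFn h1 (fun _ : Fin 1 => i) j) ∘ (Fin.rev : Fin d → Fin d))
        = (appFn h1 (fun _ : Fin 1 => i) j) ∘ (Fin.revPerm : Equiv.Perm (Fin d)) from rfl,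
      hsym Fin.revPerm, sq]
  have hterm : S ^ 2 ≤ ∑ t : Fin N, ∑ s : Fin N,
      (∑ j : Fin (d - 1) → Fin N,
        f (appFn h1 (fun _ : Fin 1 => t) j) *
          f (appFn h2 (j ∘ Fin.rev) (fun _ : Fin 1 => s))) ^ 2 := by
    calc S ^ 2 = (∑ j : Fin (d - 1) → Fin N,
          f (appFn h1 (fun _ : Fin 1 => i) j) *
            f (appFn h2 (j ∘ Fin.rev) (fun _ : Fin 1 => i))) ^ 2 := by rw [hdiag]
      _ ≤ ∑ s : Fin N, (∑ j : Fin (d - 1) → Fin N,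
            f (appFn h1 (fun _ : Fin 1 => i) j) *
              f (appFn h2 (j ∘ Fin.rev) (fun _ : Fin 1 => s))) ^ 2 :=
          Finset.single_le_sum (f := fun s : Fin N =>
            (∑ j : Fin (d - 1) → Fin N,
              f (appFn h1 (fun _ : Fin 1 => i) j) *
                f (appFn h2 (j ∘ Fin.rev) (fun _ : Fin 1 => s))) ^ 2)
            (fun _ _ => sq_nonneg _) (Finset.mem_univ i)
      _ ≤ _ := Finset.single_le_sum (f := fun t : Fin N =>
            ∑ s : Fin N, (∑ j : Fin (d - 1) → Fin N,
              f (appFn h1 (fun _ : Fin 1 => t) j) *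
                f (appFn h2 (j ∘ Fin.rev) (fun _ : Fin 1 => s))) ^ 2)
          (fun t _ => Finset.sum_nonneg fun _ _ => sq_nonneg _) (Finset.mem_univ i)
  calc Real.sqrt (∑ t : Fin N, ∑ s : Fin N,
          (∑ j : Fin (d - 1) → Fin N,
            f (appFn h1 (fun _ : Fin 1 => t) j) *
              f (appFn h2 (j ∘ Fin.rev) (fun _ : Fin 1 => s))) ^ 2)
      ≥ Real.sqrt (S ^ 2) := Real.sqrt_le_sqrt hterm
    _ = S := by rw [Real.sqrt_sq hSnn]
end

section
/- Let f : [N]² → ℝ be a symmetric kernel vanishing on the diagonal. Then ‖f ⌢_1 f − f‖ ≥ (1/2)·max_{i∈[N]} Inf_i(f), where Inf_i(f) = 2·Σ_{k∈[N]} f(i,k)². -/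
open Finset

/-- For a symmetric kernel `f : [N]² → ℝ` vanishing on the diagonal,
`‖f ⌢_1 f − f‖ ≥ (1/2)·Inf_i(f)` for every `i` (hence `≥ (1/2)·max_i Inf_i(f)`),
where `Inf_i(f) = 2·Σ_k f(i,k)²`. -/
theorem stmt3 (N : ℕ) (f : Fin N → Fin N → ℝ)
    (hsym : ∀ i j, f i j = f j i) (hvan : ∀ i, f i i = 0) :
    ∀ i : Fin N,
      Real.sqrt (∑ a : Fin N, ∑ b : Fin N,
          ((∑ k : Fin N, f a k * f k b) - f a b) ^ 2)
      ≥ (1 / 2) * (2 * ∑ k : Fin N, (f i k) ^ 2) := by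
  intro i
  have hdiag : ((∑ k : Fin N, f i k * f k i) - f i i) ^ 2
      = (∑ k : Fin N, (f i k) ^ 2) ^ 2 := by
    rw [hvan i, sub_zero]
    congr 1
    exact Finset.sum_congr rfl fun k _ => by rw [← hsym i k]; ring
  have h1 : (∑ k : Fin N, (f i k) ^ 2) ^ 2
      ≤ ∑ a : Fin N, ∑ b : Fin N, ((∑ k : Fin N, f a k * f k b) - f a b) ^ 2 := by
    rw [← hdiag]
    calc ((∑ k : Fin N, f i k * f k i) - f i i) ^ 2
        ≤ ∑ b : Fin N, ((∑ k : Fin N, f i k * f k b) - f i b) ^ 2 :=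
          Finset.single_le_sum (f := fun b => ((∑ k : Fin N, f i k * f k b) - f i b) ^ 2)
            (fun b _ => sq_nonneg _) (Finset.mem_univ i)
      _ ≤ ∑ a : Fin N, ∑ b : Fin N, ((∑ k : Fin N, f a k * f k b) - f a b) ^ 2 :=
          Finset.single_le_sum (f := fun a => ∑ b : Fin N, ((∑ k : Fin N, f a k * f k b) - f a b) ^ 2)
            (fun a _ => Finset.sum_nonneg fun b _ => sq_nonneg _) (Finset.mem_univ i)
  have hnn : (0 : ℝ) ≤ ∑ k : Fin N, (f i k) ^ 2 :=
    Finset.sum_nonneg fun k _ => sq_nonneg _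
  calc (1 / 2) * (2 * ∑ k : Fin N, (f i k) ^ 2) = ∑ k : Fin N, (f i k) ^ 2 := by ring
    _ = Real.sqrt ((∑ k : Fin N, (f i k) ^ 2) ^ 2) := (Real.sqrt_sq hnn).symm
    _ ≤ _ := Real.sqrt_le_sqrt h1
end

section
/- The number of non-crossing pair partitions of {1,…,n} is 0 if n is odd, and equals the Catalan number C_{n/2} = (1/(n/2+1))·binom(n, n/2) if n is even. -/
/-- A non-crossing pair partition of `{1,…,n}`, encoded as a fixed-point-free
involution `m` of `Fin n` (the blocks being the pairs `{i, m i}`) with no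
crossing, i.e. no `i < j < k < l` with `{i,k}` and `{j,l}` both blocks. -/
def IsNCPairing {n : ℕ} (m : Fin n → Fin n) : Prop :=
  Function.Involutive m ∧ (∀ i, m i ≠ i) ∧
    ¬ ∃ i j k l : Fin n, i < j ∧ j < k ∧ k < l ∧ m i = k ∧ m j = l

namespace NCP

abbrev P (n : ℕ) := {m : Fin n → Fin n // IsNCPairing m}

lemma even_of_fpf {s : ℕ} (m : Fin s → Fin s) (h1 : Function.Involutive m)
    (h2 : ∀ i, m i ≠ i) : Even s := by
  classical
  have key : (Finset.univ.filter (fun i : Fin s => i < m i)).card =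
      (Finset.univ.filter (fun i : Fin s => m i < i)).card := by
    apply Finset.card_nbij' (i := fun i => m i) (j := fun i => m i)
    · intro a ha
      simp only [Finset.mem_coe, Finset.mem_filter, Finset.mem_univ, true_and] at ha ⊢
      rw [h1]; exact ha
    · intro a ha
      simp only [Finset.mem_coe, Finset.mem_filter, Finset.mem_univ, true_and] at ha ⊢
      rw [h1]; exact ha
    · intro a _; exact h1 a
    · intro a _; exact h1 a
  have tot := Finset.card_filter_add_card_filter_not
    (s := (Finset.univ : Finset (Fin s))) (p := fun i => i < m i)
  have heq : Finset.univ.filter (fun i : Fin s => ¬ i < m i) =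
      Finset.univ.filter (fun i : Fin s => m i < i) := by
    apply Finset.filter_congr
    intro i _
    simp only [not_lt, eq_iff_iff]
    constructor
    · intro h; exact lt_of_le_of_ne h (h2 i)
    · intro h; exact le_of_lt h
  rw [heq, ← key, Finset.card_univ, Fintype.card_fin] at tot
  exact ⟨_, tot.symm⟩

variable {n : ℕ}

lemma pos_of_ne_z (hn : 0 < n) {a : Fin n}
    (h : a ≠ ⟨0, hn⟩) : 0 < a.val := by
  rcases Nat.eq_zero_or_pos a.val with h0 | h0
  · exact absurd (Fin.ext h0) h
  · exact h0

lemma z_lt_mz {m : Fin n → Fin n} (hm : IsNCPairing m) (hn : 0 < n) :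
    (⟨0, hn⟩ : Fin n) < m ⟨0, hn⟩ := by
  have h := hm.2.1 ⟨0, hn⟩
  have : 0 < (m ⟨0, hn⟩).val := pos_of_ne_z hn h
  simpa [Fin.lt_def] using this

lemma inner_mem {m : Fin n → Fin n} (hm : IsNCPairing m) (hn : 0 < n)
    (i : Fin n) (h0 : 0 < i.val) (ht : i < m ⟨0, hn⟩) :
    0 < (m i).val ∧ m i < m ⟨0, hn⟩ := by
  obtain ⟨hinv, hfp, hnc⟩ := hm
  set z : Fin n := ⟨0, hn⟩ with hz
  have hiz : i ≠ z := by intro h; rw [h] at h0; simp [hz] at h0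
  have h1 : m i ≠ z := by
    intro h
    have : i = m z := by rw [← h, hinv]
    exact absurd this (ne_of_lt ht)
  have h2 : m i ≠ m z := by
    intro h
    have : i = z := by have := congrArg m h; rwa [hinv, hinv] at this
    exact hiz this
  have h3 : ¬ (m z < m i) := by
    intro h
    exact hnc ⟨z, i, m z, m i, by simpa [hz, Fin.lt_def] using h0, ht, h, rfl, rfl⟩
  exact ⟨pos_of_ne_z hn h1, by
    rcases lt_trichotomy (m i) (m z) with h | h | h
    · exact h
    · exact absurd h h2
    · exact absurd h h3⟩

lemma outer_mem {m : Fin n → Fin n} (hm : IsNCPairing m) (hn : 0 < n)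
    (i : Fin n) (ht : m ⟨0, hn⟩ < i) : m ⟨0, hn⟩ < m i := by
  obtain ⟨hinv, hfp, hnc⟩ := hm
  set z : Fin n := ⟨0, hn⟩ with hz
  have hzlt : z < m z := z_lt_mz ⟨hinv, hfp, hnc⟩ hn
  have h1 : m i ≠ z := by
    intro h
    have : i = m z := by rw [← h, hinv]
    exact absurd this.symm (ne_of_lt ht)
  have h2 : m i ≠ m z := by
    intro h
    have hiz : i = z := by have := congrArg m h; rwa [hinv, hinv] at this
    rw [hiz] at ht
    exact absurd (lt_trans hzlt ht) (lt_irrefl z)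
  have h3 : ¬ (m i < m z) := by
    intro h
    refine hnc ⟨z, m i, m z, i, ?_, h, ht, rfl, hinv i⟩
    simpa [hz, Fin.lt_def] using pos_of_ne_z hn h1
  rcases lt_trichotomy (m i) (m z) with h | h | h
  · exact absurd h h3
  · exact absurd h h2
  · exact h

/-- restriction of a pairing to an invariant interval `[a, a+s)` -/
def restrict (m : Fin n → Fin n) (a s : ℕ) (hs : a + s ≤ n)
    (hmap : ∀ i : Fin n, a ≤ i.val → i.val < a + s →
      a ≤ (m i).val ∧ (m i).val < a + s) : Fin s → Fin s :=
  fun i => ⟨(m ⟨a + i.val, by omega⟩).val - a, by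
    have h := hmap ⟨a + i.val, by omega⟩ (by simp only [Fin.val_mk]; omega)
      (by simp only [Fin.val_mk]; have := i.isLt; omega)
    omega⟩

lemma restrict_nc {m : Fin n → Fin n} (hm : IsNCPairing m) (a s : ℕ) (hs : a + s ≤ n)
    (hmap : ∀ i : Fin n, a ≤ i.val → i.val < a + s →
      a ≤ (m i).val ∧ (m i).val < a + s) :
    IsNCPairing (restrict m a s hs hmap) := by
  obtain ⟨hinv, hfp, hnc⟩ := hm
  have hval : ∀ i : Fin s, a ≤ (m ⟨a + i.val, by omega⟩).val ∧
      (m ⟨a + i.val, by omega⟩).val < a + s := by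
    intro i
    exact hmap ⟨a + i.val, by omega⟩ (by simp only [Fin.val_mk]; omega)
      (by simp only [Fin.val_mk]; have := i.isLt; omega)
  refine ⟨?_, ?_, ?_⟩
  · intro x
    have h1 := hval x
    apply Fin.ext
    show (m ⟨a + ((m ⟨a + x.val, by omega⟩).val - a), by omega⟩).val - a = x.val
    have heq : (⟨a + ((m ⟨a + x.val, by omega⟩).val - a), by omega⟩ : Fin n)
        = m ⟨a + x.val, by omega⟩ := Fin.ext (by simp only [Fin.val_mk]; omega)
    rw [heq, hinv]
    simp only [Fin.val_mk]
    omega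
  · intro x hx
    have h1 := hval x
    have h2 : (m ⟨a + x.val, by omega⟩).val - a = x.val := congrArg Fin.val hx
    have heq : m ⟨a + x.val, by omega⟩ = ⟨a + x.val, by omega⟩ :=
      Fin.ext (by simp only [Fin.val_mk]; omega)
    exact hfp _ heq
  · rintro ⟨i, j, k, l, hij, hjk, hkl, hik, hjl⟩
    have hik' : (m ⟨a + i.val, by omega⟩).val - a = k.val := congrArg Fin.val hik
    have hjl' : (m ⟨a + j.val, by omega⟩).val - a = l.val := congrArg Fin.val hjl
    have h1 := hval i
    have h2 := hval j
    rw [Fin.lt_def] at hij hjk hkl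
    refine hnc ⟨⟨a + i.val, by omega⟩, ⟨a + j.val, by omega⟩,
      ⟨a + k.val, by omega⟩, ⟨a + l.val, by omega⟩, ?_, ?_, ?_, ?_, ?_⟩
    · rw [Fin.lt_def]; simp only [Fin.val_mk]; omega
    · rw [Fin.lt_def]; simp only [Fin.val_mk]; omega
    · rw [Fin.lt_def]; simp only [Fin.val_mk]; omega
    · exact Fin.ext (by simp only [Fin.val_mk]; omega)
    · exact Fin.ext (by simp only [Fin.val_mk]; omega)

variable {s₁ s₂ : ℕ}

def glue (p : Fin s₁ → Fin s₁) (q : Fin s₂ → Fin s₂) :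
    Fin (s₁ + s₂ + 2) → Fin (s₁ + s₂ + 2) := fun i =>
  if h0 : i.val = 0 then ⟨s₁ + 1, by omega⟩
  else if h1 : i.val ≤ s₁ then
    ⟨(p ⟨i.val - 1, by have := i.isLt; omega⟩).val + 1,
      by have := (p ⟨i.val - 1, by have := i.isLt; omega⟩).isLt; omega⟩
  else if h2 : i.val = s₁ + 1 then ⟨0, by omega⟩
  else ⟨(q ⟨i.val - s₁ - 2, by have := i.isLt; omega⟩).val + s₁ + 2,
      by have := (q ⟨i.val - s₁ - 2, by have := i.isLt; omega⟩).isLt; omega⟩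

lemma glue_zero (p : Fin s₁ → Fin s₁) (q : Fin s₂ → Fin s₂) {i : Fin (s₁+s₂+2)}
    (h : i.val = 0) : (glue p q i).val = s₁ + 1 := by simp [glue, h]

lemma glue_inner (p : Fin s₁ → Fin s₁) (q : Fin s₂ → Fin s₂) {i : Fin (s₁+s₂+2)}
    (h0 : i.val ≠ 0) (h1 : i.val ≤ s₁) (h2 : i.val - 1 < s₁) :
    (glue p q i).val = (p ⟨i.val - 1, h2⟩).val + 1 := by
  simp [glue, h0, h1]

lemma glue_top (p : Fin s₁ → Fin s₁) (q : Fin s₂ → Fin s₂) {i : Fin (s₁+s₂+2)}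
    (h : i.val = s₁ + 1) : (glue p q i).val = 0 := by
  have h0 : ¬ i.val = 0 := by omega
  have h1 : ¬ i.val ≤ s₁ := by omega
  simp [glue, h0, h1, h]

lemma glue_outer (p : Fin s₁ → Fin s₁) (q : Fin s₂ → Fin s₂) {i : Fin (s₁+s₂+2)}
    (h : s₁ + 1 < i.val) (h2 : i.val - s₁ - 2 < s₂) :
    (glue p q i).val = (q ⟨i.val - s₁ - 2, h2⟩).val + s₁ + 2 := by
  have h0 : ¬ i.val = 0 := by omega
  have h1 : ¬ i.val ≤ s₁ := by omega
  have h2' : ¬ i.val = s₁ + 1 := by omega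
  simp [glue, h0, h1, h2']

lemma glue_nc {p : Fin s₁ → Fin s₁} {q : Fin s₂ → Fin s₂}
    (hp : IsNCPairing p) (hq : IsNCPairing q) : IsNCPairing (glue p q) := by
  obtain ⟨hpinv, hpfp, hpnc⟩ := hp
  obtain ⟨hqinv, hqfp, hqnc⟩ := hq
  refine ⟨?_, ?_, ?_⟩
  · intro i
    apply Fin.ext
    rcases Nat.eq_zero_or_pos i.val with h0 | h0
    · have e1 := glue_zero p q h0
      have e2 := glue_top p q (i := glue p q i) e1
      omega
    · by_cases h1 : i.val ≤ s₁
      · have e1 := glue_inner p q (by omega) h1 (by have := i.isLt; omega)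
        set x : Fin s₁ := ⟨i.val - 1, by have := i.isLt; omega⟩ with hx
        have hb := (p x).isLt
        have e2 := glue_inner p q (i := glue p q i) (by omega) (by omega) (by have := (glue p q i).isLt; omega)
        rw [e2]
        have : (⟨(glue p q i).val - 1, by have := (glue p q i).isLt; omega⟩ : Fin s₁)
            = p x := Fin.ext (by simp only [Fin.val_mk]; omega)
        rw [this, hpinv]
        simp only [hx, Fin.val_mk]
        omega
      · by_cases h2 : i.val = s₁ + 1
        · have e1 := glue_top p q h2
          have e2 := glue_zero p q (i := glue p q i) e1
          omega
        · have e1 := glue_outer p q (i := i) (by omega) (by have := i.isLt; omega)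
          set x : Fin s₂ := ⟨i.val - s₁ - 2, by have := i.isLt; omega⟩ with hx
          have hb := (q x).isLt
          have e2 := glue_outer p q (i := glue p q i) (by omega) (by have := (glue p q i).isLt; omega)
          rw [e2]
          have : (⟨(glue p q i).val - s₁ - 2, by have := (glue p q i).isLt; omega⟩ : Fin s₂)
              = q x := Fin.ext (by simp only [Fin.val_mk]; omega)
          rw [this, hqinv]
          simp only [hx, Fin.val_mk]
          omega
  · intro i h
    have h' : (glue p q i).val = i.val := congrArg Fin.val h
    rcases Nat.eq_zero_or_pos i.val with h0 | h0
    · have := glue_zero p q h0; omega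
    · by_cases h1 : i.val ≤ s₁
      · have e1 := glue_inner p q (by omega) h1 (by have := i.isLt; omega)
        set x : Fin s₁ := ⟨i.val - 1, by have := i.isLt; omega⟩ with hx
        refine hpfp x (Fin.ext ?_)
        simp only [hx, Fin.val_mk]
        omega
      · by_cases h2 : i.val = s₁ + 1
        · have := glue_top p q h2; omega
        · have e1 := glue_outer p q (i := i) (by omega) (by have := i.isLt; omega)
          set x : Fin s₂ := ⟨i.val - s₁ - 2, by have := i.isLt; omega⟩ with hx
          refine hqfp x (Fin.ext ?_)
          simp only [hx, Fin.val_mk]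
          omega
  · rintro ⟨i, j, k, l, hij, hjk, hkl, hik, hjl⟩
    rw [Fin.lt_def] at hij hjk hkl
    have hik' : (glue p q i).val = k.val := congrArg Fin.val hik
    have hjl' : (glue p q j).val = l.val := congrArg Fin.val hjl
    rcases Nat.eq_zero_or_pos i.val with h0 | h0
    · -- i = 0, k = s₁+1, j inner, l = glue j > s₁+1 impossible
      have e1 := glue_zero p q h0
      have hj1 : j.val ≤ s₁ := by omega
      have e2 := glue_inner p q (i := j) (by omega) hj1 (by have := j.isLt; omega)
      have := (p ⟨j.val - 1, by have := j.isLt; omega⟩).isLt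
      omega
    · by_cases h1 : i.val ≤ s₁
      · -- all inner: crossing in p
        have e1 := glue_inner p q (i := i) (by omega) h1 (by have := i.isLt; omega)
        have hbi := (p ⟨i.val - 1, by have := i.isLt; omega⟩).isLt
        have hk1 : k.val ≤ s₁ := by omega
        have hj1 : j.val ≤ s₁ := by omega
        have e2 := glue_inner p q (i := j) (by omega) hj1 (by have := j.isLt; omega)
        have hbj := (p ⟨j.val - 1, by have := j.isLt; omega⟩).isLt
        have hl1 : l.val ≤ s₁ := by omega
        refine hpnc ⟨⟨i.val - 1, by have := i.isLt; omega⟩, ⟨j.val - 1, by have := j.isLt; omega⟩,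
          ⟨k.val - 1, by omega⟩, ⟨l.val - 1, by omega⟩, ?_, ?_, ?_, ?_, ?_⟩
        · rw [Fin.lt_def]; simp only [Fin.val_mk]; omega
        · rw [Fin.lt_def]; simp only [Fin.val_mk]; omega
        · rw [Fin.lt_def]; simp only [Fin.val_mk]; omega
        · exact Fin.ext (by simp only [Fin.val_mk]; omega)
        · exact Fin.ext (by simp only [Fin.val_mk]; omega)
      · by_cases h2 : i.val = s₁ + 1
        · have := glue_top p q h2; omega
        · -- all outer : crossing in q
          have e1 := glue_outer p q (i := i) (by omega) (by have := i.isLt; omega)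
          have e2 := glue_outer p q (i := j) (by omega) (by have := j.isLt; omega)
          refine hqnc ⟨⟨i.val - s₁ - 2, by have := i.isLt; omega⟩,
            ⟨j.val - s₁ - 2, by have := j.isLt; omega⟩,
            ⟨k.val - s₁ - 2, by have := k.isLt; omega⟩,
            ⟨l.val - s₁ - 2, by have := l.isLt; omega⟩, ?_, ?_, ?_, ?_, ?_⟩
          · rw [Fin.lt_def]; simp only [Fin.val_mk]; omega
          · rw [Fin.lt_def]; simp only [Fin.val_mk]; omega
          · rw [Fin.lt_def]; simp only [Fin.val_mk]; omega
          · exact Fin.ext (by simp only [Fin.val_mk]; omega)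
          · exact Fin.ext (by simp only [Fin.val_mk]; omega)

/-- transport along an equality of sizes -/
def recast {a b : ℕ} (h : a = b) (m : Fin a → Fin a) : Fin b → Fin b :=
  fun i => ⟨(m ⟨i.val, by omega⟩).val, by have := (m ⟨i.val, by omega⟩).isLt; omega⟩

lemma recast_rfl {a : ℕ} (m : Fin a → Fin a) : recast rfl m = m := rfl

lemma recast_nc {a b : ℕ} (h : a = b) {m : Fin a → Fin a} (hm : IsNCPairing m) :
    IsNCPairing (recast h m) := by subst h; exact hm

lemma recast_val {a b : ℕ} (h : a = b) (m : Fin a → Fin a) (i : Fin b)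
    (hb : i.val < a) : (recast h m i).val = (m ⟨i.val, hb⟩).val := rfl

def invSig (k : ℕ) (x : Σ j : Fin (k+1), P (2*(j:ℕ)) × P (2*k - 2*(j:ℕ))) : P (2*k+2) :=
  ⟨recast (by have := x.1.isLt; omega) (glue x.2.1.1 x.2.2.1),
   recast_nc _ (glue_nc x.2.1.2 x.2.2.2)⟩

lemma invSig_inj (k : ℕ) : Function.Injective (invSig k) := by
  rintro ⟨j, ⟨p, hp⟩, ⟨q, hq⟩⟩ ⟨j', ⟨p', hp'⟩, ⟨q', hq'⟩⟩ h
  have hj := j.isLt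
  have hj' := j'.isLt
  have hfun := congrArg Subtype.val h
  simp only [invSig] at hfun
  have hev : ∀ (e : ℕ) (hb : e < 2*(j:ℕ) + (2*k - 2*(j:ℕ)) + 2)
      (hb' : e < 2*(j':ℕ) + (2*k - 2*(j':ℕ)) + 2),
      (glue p q ⟨e, hb⟩).val = (glue p' q' ⟨e, hb'⟩).val := by
    intro e hb hb'
    have h1 := congrArg Fin.val (congrFun hfun ⟨e, by omega⟩)
    rw [recast_val _ _ _ (by simpa using hb), recast_val _ _ _ (by simpa using hb')] at h1
    exact h1
  have hjj : j = j' := by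
    have h0 := hev 0 (by omega) (by omega)
    rw [glue_zero p q (by simp), glue_zero p' q' (by simp)] at h0
    exact Fin.ext (by omega)
  subst hjj
  have hpp : p = p' := by
    funext x
    have hx := x.isLt
    have hb : x.val + 1 < 2*(j:ℕ) + (2*k - 2*(j:ℕ)) + 2 := by omega
    have hb2 : (⟨x.val + 1, hb⟩ : Fin (2*(j:ℕ) + (2*k - 2*(j:ℕ)) + 2)).val - 1 < 2*(j:ℕ) := by
      simp
    have he := hev (x.val + 1) hb hb
    rw [glue_inner p q (by simp) (by simp) hb2,
        glue_inner p' q' (by simp) (by simp) hb2] at he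
    have e1 : (⟨(⟨x.val + 1, hb⟩ : Fin (2*(j:ℕ) + (2*k - 2*(j:ℕ)) + 2)).val - 1,
        hb2⟩ : Fin (2*(j:ℕ))) = x := Fin.ext (by simp)
    rw [e1] at he
    exact Fin.ext (by omega)
  subst hpp
  have hqq : q = q' := by
    funext x
    have hx := x.isLt
    have hb : x.val + 2*(j:ℕ) + 2 < 2*(j:ℕ) + (2*k - 2*(j:ℕ)) + 2 := by omega
    have hb2 : (⟨x.val + 2*(j:ℕ) + 2, hb⟩ : Fin (2*(j:ℕ) + (2*k - 2*(j:ℕ)) + 2)).val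
        - 2*(j:ℕ) - 2 < 2*k - 2*(j:ℕ) := by simp; omega
    have he := hev (x.val + 2*(j:ℕ) + 2) hb hb
    rw [glue_outer p q (by simp) hb2, glue_outer p q' (by simp) hb2] at he
    have e1 : (⟨(⟨x.val + 2*(j:ℕ) + 2, hb⟩ : Fin (2*(j:ℕ) + (2*k - 2*(j:ℕ)) + 2)).val
        - 2*(j:ℕ) - 2, hb2⟩ : Fin (2*k - 2*(j:ℕ))) = x := Fin.ext (by simp; omega)
    rw [e1] at he
    exact Fin.ext (by omega)
  subst hqq
  rfl

lemma restrict_val {n : ℕ} (m : Fin n → Fin n) (a s : ℕ) (hs : a + s ≤ n)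
    (hmap : ∀ i : Fin n, a ≤ i.val → i.val < a + s →
      a ≤ (m i).val ∧ (m i).val < a + s) (i : Fin s) (hb : a + i.val < n) :
    (restrict m a s hs hmap i).val = (m ⟨a + i.val, hb⟩).val - a := rfl

set_option maxHeartbeats 1000000 in
lemma invSig_surj (k : ℕ) : Function.Surjective (invSig k) := by
  rintro ⟨f, hf⟩
  have hn : 0 < 2*k+2 := by omega
  have ht0 : 0 < (f ⟨0, hn⟩).val := by
    have := z_lt_mz hf hn
    rw [Fin.lt_def] at this
    simpa using this
  have htlt : (f ⟨0, hn⟩).val < 2*k+2 := (f ⟨0, hn⟩).isLt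
  have hmapI : ∀ i : Fin (2*k+2), 1 ≤ i.val → i.val < 1 + ((f ⟨0, hn⟩).val - 1) →
      1 ≤ (f i).val ∧ (f i).val < 1 + ((f ⟨0, hn⟩).val - 1) := by
    intro i h1 h2
    have h3 := inner_mem hf hn i (by omega) (by rw [Fin.lt_def]; omega)
    rw [Fin.lt_def] at h3
    omega
  have hiNC := restrict_nc hf 1 ((f ⟨0, hn⟩).val - 1) (by omega) hmapI
  obtain ⟨c, hc⟩ := even_of_fpf _ hiNC.1 hiNC.2.1
  have hck : c ≤ k := by omega
  have hmapI' : ∀ i : Fin (2*k+2), 1 ≤ i.val → i.val < 1 + 2*c →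
      1 ≤ (f i).val ∧ (f i).val < 1 + 2*c := by
    intro i h1 h2
    have := hmapI i h1 (by omega)
    omega
  have hmapO : ∀ i : Fin (2*k+2), (f ⟨0, hn⟩).val + 1 ≤ i.val →
      i.val < ((f ⟨0, hn⟩).val + 1) + (2*k - 2*c) →
      (f ⟨0, hn⟩).val + 1 ≤ (f i).val ∧
        (f i).val < ((f ⟨0, hn⟩).val + 1) + (2*k - 2*c) := by
    intro i h1 h2
    have h3 := outer_mem hf hn i (by rw [Fin.lt_def]; omega)
    rw [Fin.lt_def] at h3
    have := (f i).isLt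
    omega
  refine ⟨⟨⟨c, by omega⟩,
    ⟨restrict f 1 (2*c) (by omega) hmapI', restrict_nc hf 1 (2*c) (by omega) hmapI'⟩,
    ⟨restrict f ((f ⟨0, hn⟩).val + 1) (2*k - 2*c) (by omega) hmapO,
      restrict_nc hf ((f ⟨0, hn⟩).val + 1) (2*k - 2*c) (by omega) hmapO⟩⟩, ?_⟩
  apply Subtype.ext
  simp only [invSig]
  funext i
  apply Fin.ext
  have hb : i.val < 2*c + (2*k - 2*c) + 2 := by have := i.isLt; omega
  rw [recast_val _ _ _ hb]
  by_cases h0 : i.val = 0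
  · rw [glue_zero _ _ h0]
    have : i = ⟨0, hn⟩ := Fin.ext h0
    rw [this]
    omega
  · by_cases h1 : i.val ≤ 2*c
    · have hb2 : (⟨i.val, hb⟩ : Fin (2*c + (2*k - 2*c) + 2)).val - 1 < 2*c := by
        simp only [Fin.val_mk]; omega
      rw [glue_inner _ _ h0 h1 hb2]
      have hb3 : 1 + ((⟨i.val, hb⟩ : Fin (2*c + (2*k - 2*c) + 2)).val - 1) < 2*k+2 := by
        simp only [Fin.val_mk]; omega
      rw [restrict_val _ _ _ _ _ _ hb3]
      have e1 : (⟨1 + ((⟨i.val, hb⟩ : Fin (2*c + (2*k - 2*c) + 2)).val - 1), hb3⟩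
          : Fin (2*k+2)) = i := Fin.ext (by simp only [Fin.val_mk]; omega)
      rw [e1]
      have := hmapI' i (by omega) (by omega)
      omega
    · by_cases h2 : i.val = 2*c + 1
      · rw [glue_top _ _ h2]
        have e1 : i = f ⟨0, hn⟩ := Fin.ext (by omega)
        rw [e1, hf.1]
      · have hout : 2*c + 1 < (⟨i.val, hb⟩ : Fin (2*c + (2*k - 2*c) + 2)).val := by
          simp only [Fin.val_mk]; omega
        have hb2 : (⟨i.val, hb⟩ : Fin (2*c + (2*k - 2*c) + 2)).val - 2*c - 2
            < 2*k - 2*c := by simp only [Fin.val_mk]; have := i.isLt; omega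
        rw [glue_outer _ _ hout hb2]
        have hb3 : ((f ⟨0, hn⟩).val + 1) +
            ((⟨i.val, hb⟩ : Fin (2*c + (2*k - 2*c) + 2)).val - 2*c - 2) < 2*k+2 := by
          simp only [Fin.val_mk]; have := i.isLt; omega
        rw [restrict_val _ _ _ _ _ _ hb3]
        have e1 : (⟨((f ⟨0, hn⟩).val + 1) +
            ((⟨i.val, hb⟩ : Fin (2*c + (2*k - 2*c) + 2)).val - 2*c - 2), hb3⟩
            : Fin (2*k+2)) = i := Fin.ext (by simp only [Fin.val_mk]; omega)
        rw [e1]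
        have := hmapO i (by omega) (by omega)
        omega

noncomputable def sigEquiv (k : ℕ) : (Σ j : Fin (k+1), P (2*(j:ℕ)) × P (2*k - 2*(j:ℕ))) ≃ P (2*k+2) :=
  Equiv.ofBijective _ ⟨invSig_inj k, invSig_surj k⟩

instance : Unique (P 0) where
  default := ⟨fun i => i.elim0, fun i => i.elim0, fun i => i.elim0,
    by rintro ⟨i, -⟩; exact i.elim0⟩
  uniq := fun m => Subtype.ext (funext fun i => i.elim0)

lemma card_sigma' {ι : Type*} [Fintype ι] (f : ι → Type*) [∀ i, Finite (f i)] :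
    Nat.card (Σ i, f i) = ∑ i, Nat.card (f i) := by
  letI : ∀ i, Fintype (f i) := fun i => Fintype.ofFinite _
  simp [Nat.card_eq_fintype_card]

lemma card_P : ∀ k : ℕ, Nat.card (P (2*k)) = catalan k := by
  intro k
  induction k using Nat.strong_induction_on with
  | _ k ih =>
    obtain _ | k := k
    · rw [catalan_zero, show 2*0 = 0 from rfl]
      exact Nat.card_unique
    · have h2 : 2*(k+1) = 2*k+2 := by ring
      rw [h2]
      calc Nat.card (P (2*k+2))
          = Nat.card (Σ j : Fin (k+1), P (2*(j:ℕ)) × P (2*k - 2*(j:ℕ))) :=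
            (Nat.card_congr (sigEquiv k)).symm
        _ = ∑ j : Fin (k+1), Nat.card (P (2*(j:ℕ)) × P (2*k - 2*(j:ℕ))) :=
            card_sigma' _
        _ = ∑ j : Fin (k+1), catalan (j:ℕ) * catalan (k - (j:ℕ)) := by
            apply Finset.sum_congr rfl
            intro j _
            have hj := j.isLt
            rw [Nat.card_prod]
            have e1 : 2*k - 2*(j:ℕ) = 2*(k - (j:ℕ)) := by omega
            rw [e1, ih _ (by omega), ih _ (by omega)]
        _ = catalan (k+1) := (catalan_succ k).symm

end NCP


/-- The number of non-crossing pair partitions of `{1,…,n}` is `0` for odd `n`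
and the Catalan number `C_{n/2} = (1/(n/2+1))·binom(n, n/2)` for even `n`. -/
theorem stmt16 (n : ℕ) :
    (¬ Even n → Nat.card {m : Fin n → Fin n // IsNCPairing m} = 0) ∧
    (Even n → Nat.card {m : Fin n → Fin n // IsNCPairing m} =
      Nat.choose n (n / 2) / (n / 2 + 1)) := by
  constructor
  · intro hodd
    have : IsEmpty {m : Fin n → Fin n // IsNCPairing m} :=
      ⟨fun m => hodd (NCP.even_of_fpf m.1 m.2.1 m.2.2.1)⟩
    exact Nat.card_of_isEmpty
  · rintro ⟨k, rfl⟩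
    have e1 : (k + k) / 2 = k := by omega
    have e2 : k + k = 2*k := by ring
    rw [e1, e2, NCP.card_P k, catalan_eq_centralBinom_div, Nat.centralBinom]
end

section
/- Let d ≥ 2, h₁,…,h_d positive integers with h_i = h_{d−i+1}, m = h₁+⋯+h_d, H a separable Hilbert space with orthonormal family (e_i), and let f : [N]^d → ℝ be mirror symmetric and vanishing on diagonals. Let k = Σ f(i_1,…,i_d) e_{i_1}^{⊗h₁} ⊗ ⋯ ⊗ e_{i_d}^{⊗h_d} ∈ H^{⊗m}. Then for every q = 1,…,d−1, taking r = h₁+⋯+h_q, one has ‖k ⌢_r k‖_{H^{⊗(2m−2r)}} = ‖f ⌢_q f‖, where the right-hand norm is the ℓ² norm of the discrete contraction kernel. -/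
open Finset

/-- The list of basis indices of the elementary tensor
`e_{i_1}^{⊗h_1} ⊗ ⋯ ⊗ e_{i_d}^{⊗h_d}`: each index `i q` repeated `h q` times. -/
def tensorWord {d N : ℕ} (h : Fin d → ℕ) (i : Fin d → Fin N) : List (Fin N) :=
  (List.ofFn (fun q => List.replicate (h q) (i q))).flatten

/-- The coefficient of the element `k = Σ_i f(i) e_{i_1}^{⊗h_1} ⊗ ⋯ ⊗ e_{i_d}^{⊗h_d}`
of `H^{⊗m}` on the orthonormal basis tensor `e_{v_1} ⊗ ⋯ ⊗ e_{v_m}`. -/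
def coeffK {d N m : ℕ} (h : Fin d → ℕ) (f : (Fin d → Fin N) → ℝ)
    (v : Fin m → Fin N) : ℝ :=
  ∑ i : Fin d → Fin N, if List.ofFn v = tensorWord h i then f i else 0

namespace Stmt18

lemma ofFn_comp_cast {α : Type*} {a b : ℕ} (e : a = b) (f : Fin a → α) :
    List.ofFn (fun p : Fin b => f (Fin.cast e.symm p)) = List.ofFn f := by
  subst e; rfl

lemma ofFn_appFn {N a b c : ℕ} (e : a + b = c) (t : Fin a → Fin N) (u : Fin b → Fin N) :
    List.ofFn (appFn e t u) = List.ofFn t ++ List.ofFn u := by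
  show List.ofFn (fun p : Fin c => Fin.append t u (Fin.cast e.symm p)) = _
  rw [ofFn_comp_cast e (Fin.append t u)]
  exact List.ofFn_fin_append t u

lemma ofFn_comp_rev {α : Type*} {n : ℕ} (f : Fin n → α) :
    List.ofFn (f ∘ Fin.rev) = (List.ofFn f).reverse := by
  apply List.ext_getElem
  · simp
  · intro i h1 h2
    simp only [List.getElem_ofFn, List.getElem_reverse, List.getElem_ofFn, Function.comp]
    congr 1
    simp only [List.length_ofFn] at h1 h2 ⊢
    ext
    simp [Fin.rev]
    omega

lemma length_tensorWord {d N : ℕ} (g : Fin d → ℕ) (i : Fin d → Fin N) :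
    (tensorWord g i).length = ∑ p, g p := by
  simp [tensorWord, List.length_flatten, List.map_ofFn, Function.comp_def, List.sum_ofFn]

lemma tensorWord_appFn {N a b c : ℕ} (e : a + b = c) (g : Fin c → ℕ)
    (t : Fin a → Fin N) (u : Fin b → Fin N) :
    tensorWord g (appFn e t u)
      = tensorWord (fun p => g (Fin.cast e (Fin.castAdd b p))) t
        ++ tensorWord (fun p => g (Fin.cast e (Fin.natAdd a p))) u := by
  subst e
  unfold tensorWord appFn
  rw [List.ofFn_add (f := fun p : Fin (a + b) =>
    List.replicate (g p) (Fin.append t u (Fin.cast rfl p))), List.flatten_append]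
  congr 1
  · exact congrArg _ (congrArg List.ofFn (funext fun p => by
      simp [Fin.append_left, Fin.cast_refl]; rfl))
  · exact congrArg _ (congrArg List.ofFn (funext fun p => by
      simp [Fin.append_right, Fin.cast_refl]))

lemma tensorWord_reverse {d N : ℕ} (g : Fin d → ℕ) (i : Fin d → Fin N) :
    (tensorWord g i).reverse = tensorWord (g ∘ Fin.rev) (i ∘ Fin.rev) := by
  unfold tensorWord
  rw [List.reverse_flatten, List.map_ofFn, ← ofFn_comp_rev]
  exact congrArg _ (congrArg List.ofFn (funext fun p => by simp))

lemma tensorWord_injective {N : ℕ} : ∀ {d : ℕ} (g : Fin d → ℕ), (∀ p, 1 ≤ g p) →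
    ∀ {i j : Fin d → Fin N}, tensorWord g i = tensorWord g j → i = j := by
  intro d
  induction d with
  | zero => intro g _ i j _; funext p; exact p.elim0
  | succ n IH =>
    intro g hg i j hij
    unfold tensorWord at hij
    rw [List.ofFn_succ, List.ofFn_succ] at hij
    simp only [List.flatten_cons] at hij
    have hpos0 : 0 < g 0 := hg 0
    have h0 : i 0 = j 0 := by
      have h1 := congrArg (fun l : List (Fin N) => l[0]?) hij
      rw [List.getElem?_append_left (by simpa using hpos0),
        List.getElem?_append_left (by simpa using hpos0),
        List.getElem?_replicate, List.getElem?_replicate,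
        if_pos hpos0, if_pos hpos0] at h1
      exact Option.some_injective _ h1
    rw [h0] at hij
    have htail := List.append_cancel_left hij
    have := IH (fun p => g p.succ) (fun p => hg p.succ) (i := fun p => i p.succ)
      (j := fun p => j p.succ) htail
    funext p
    cases p using Fin.cases with
    | zero => exact h0
    | succ p => exact congrFun this p

def fromList {N n : ℕ} (l : List (Fin N)) (hl : l.length = n) : Fin n → Fin N :=
  fun p => l.get (Fin.cast hl.symm p)

lemma ofFn_fromList {N n : ℕ} (l : List (Fin N)) (hl : l.length = n) :
    List.ofFn (fromList l hl) = l := by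
  subst hl; exact List.ofFn_get l

lemma appFn_left {N a b c : ℕ} (e : a + b = c) (t : Fin a → Fin N) (u : Fin b → Fin N)
    (p : Fin a) : appFn e t u (Fin.cast e (Fin.castAdd b p)) = t p := by
  subst e
  simp [appFn, Fin.cast_refl, Fin.append_left]

lemma appFn_right {N a b c : ℕ} (e : a + b = c) (t : Fin a → Fin N) (u : Fin b → Fin N)
    (p : Fin b) : appFn e t u (Fin.cast e (Fin.natAdd a p)) = u p := by
  subst e
  simp [appFn, Fin.cast_refl, Fin.append_right]

lemma appFn_eta {N a b c : ℕ} (e : a + b = c) (i : Fin c → Fin N) :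
    appFn e (fun p => i (Fin.cast e (Fin.castAdd b p)))
      (fun p => i (Fin.cast e (Fin.natAdd a p))) = i := by
  subst e
  funext x
  simp only [appFn, Fin.cast_refl, id_eq, Function.comp]
  induction x using Fin.addCases with
  | left p => rw [Fin.append_left]
  | right p => rw [Fin.append_right]

def appEquiv {N a b c : ℕ} (e : a + b = c) :
    ((Fin a → Fin N) × (Fin b → Fin N)) ≃ (Fin c → Fin N) where
  toFun tu := appFn e tu.1 tu.2
  invFun i := (fun p => i (Fin.cast e (Fin.castAdd b p)),
               fun p => i (Fin.cast e (Fin.natAdd a p)))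
  left_inv := by
    rintro ⟨t, u⟩
    refine Prod.ext (funext fun p => ?_) (funext fun p => ?_)
    · exact appFn_left e t u p
    · exact appFn_right e t u p
  right_inv := fun i => appFn_eta e i

lemma coeffK_append {N dA dB d mA mB m : ℕ}
    (g : Fin d → ℕ) (f : (Fin d → Fin N) → ℝ)
    (eD : dA + dB = d) (eM : mA + mB = m)
    (hA : ∀ t : Fin dA → Fin N,
      (tensorWord (fun p => g (Fin.cast eD (Fin.castAdd dB p))) t).length = mA)
    (a : Fin mA → Fin N) (w : Fin mB → Fin N) :
    coeffK g f (appFn eM a w)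
      = ∑ p : (Fin dA → Fin N) × (Fin dB → Fin N),
          if List.ofFn a = tensorWord (fun x => g (Fin.cast eD (Fin.castAdd dB x))) p.1
             ∧ List.ofFn w = tensorWord (fun x => g (Fin.cast eD (Fin.natAdd dA x))) p.2
          then f (appFn eD p.1 p.2) else 0 := by
  unfold coeffK
  rw [← Equiv.sum_comp (appEquiv (N := N) eD)
    (fun i => if List.ofFn (appFn eM a w) = tensorWord g i then f i else 0)]
  refine Finset.sum_congr rfl fun p _ => ?_
  have hval : appEquiv (N := N) eD p = appFn eD p.1 p.2 := rfl
  rw [hval, ofFn_appFn, tensorWord_appFn]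
  refine if_congr ?_ rfl rfl
  constructor
  · intro hEq
    have hlen : (List.ofFn a).length
        = (tensorWord (fun x => g (Fin.cast eD (Fin.castAdd dB x))) p.1).length := by
      rw [List.length_ofFn, hA p.1]
    exact List.append_inj hEq hlen
  · rintro ⟨h1, h2⟩; rw [h1, h2]



lemma abstract_sum {A W C D : Type*} [Fintype A] [Fintype W] [Fintype C] [Fintype D]
    [DecidableEq A] [DecidableEq W] [DecidableEq C] [DecidableEq D]
    (T S : C → A) (U : D → W) (hT : Function.Injective T) (hS : Function.Injective S)
    (hU : Function.Injective U)
    (F1 : A → W → ℝ) (F2 : W → A → ℝ) (f1 : C → D → ℝ) (f2 : D → C → ℝ)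
    (h1 : ∀ a w, F1 a w = ∑ p : C × D,
        if a = T p.1 ∧ w = U p.2 then f1 p.1 p.2 else 0)
    (h2 : ∀ w b, F2 w b = ∑ p : D × C,
        if w = U p.1 ∧ b = S p.2 then f2 p.1 p.2 else 0) :
    ∑ a : A, ∑ b : A, (∑ w : W, F1 a w * F2 w b) ^ 2
      = ∑ t : C, ∑ s : C, (∑ u : D, f1 t u * f2 u s) ^ 2 := by
  classical
  have key : ∀ a b, (∑ w : W, F1 a w * F2 w b)
      = ∑ p : C × C, if a = T p.1 ∧ b = S p.2
          then (∑ u : D, f1 p.1 u * f2 u p.2) else 0 := by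
    intro a b
    calc ∑ w : W, F1 a w * F2 w b
        = ∑ w : W, ∑ p : C × D, ∑ p' : D × C,
            (if a = T p.1 ∧ w = U p.2 then f1 p.1 p.2 else 0) *
            (if w = U p'.1 ∧ b = S p'.2 then f2 p'.1 p'.2 else 0) := by
          refine Finset.sum_congr rfl fun w _ => ?_
          rw [h1, h2, Finset.sum_mul_sum]
      _ = ∑ p : C × D, ∑ p' : D × C, ∑ w : W,
            (if a = T p.1 ∧ w = U p.2 then f1 p.1 p.2 else 0) *
            (if w = U p'.1 ∧ b = S p'.2 then f2 p'.1 p'.2 else 0) := by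
          rw [Finset.sum_comm]
          exact Finset.sum_congr rfl fun p _ => Finset.sum_comm
      _ = ∑ p : C × D, ∑ p' : D × C,
            if p'.1 = p.2 then
              (if a = T p.1 then f1 p.1 p.2 else 0) *
              (if b = S p'.2 then f2 p'.1 p'.2 else 0) else 0 := by
          refine Finset.sum_congr rfl fun p _ => Finset.sum_congr rfl fun p' _ => ?_
          obtain ⟨t, u⟩ := p
          obtain ⟨u₂, s⟩ := p'
          simp only
          by_cases hu : u₂ = u
          · subst hu
            rw [if_pos rfl]
            rw [Finset.sum_eq_single (U u₂)]
            · simp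
            · intro w _ hw
              have hzero : (if a = T t ∧ w = U u₂ then f1 t u₂ else 0) = 0 :=
                if_neg (fun hc => hw hc.2)
              rw [hzero, zero_mul]
            · intro hmem; exact absurd (Finset.mem_univ _) hmem
          · rw [if_neg hu]
            refine Finset.sum_eq_zero fun w _ => ?_
            by_cases hc1 : a = T t ∧ w = U u
            · have hzero : (if w = U u₂ ∧ b = S s then f2 u₂ s else 0) = 0 :=
                if_neg (fun hc2 => hu (hU (hc1.2.symm.trans hc2.1)).symm)
              rw [hzero, mul_zero]
            · rw [if_neg hc1, zero_mul]
      _ = ∑ p : C × D, ∑ s : C,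
            (if a = T p.1 then f1 p.1 p.2 else 0) *
            (if b = S s then f2 p.2 s else 0) := by
          refine Finset.sum_congr rfl fun p _ => ?_
          rw [Fintype.sum_prod_type]
          calc ∑ u₂ : D, ∑ s : C, (if u₂ = p.2 then
                  (if a = T p.1 then f1 p.1 p.2 else 0) *
                  (if b = S s then f2 u₂ s else 0) else 0)
              = ∑ u₂ : D, if u₂ = p.2 then
                  (∑ s : C, (if a = T p.1 then f1 p.1 p.2 else 0) *
                    (if b = S s then f2 u₂ s else 0)) else 0 := by
                refine Finset.sum_congr rfl fun u₂ _ => ?_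
                by_cases hc : u₂ = p.2 <;> simp [hc]
            _ = _ := by
                rw [Finset.sum_ite_eq' Finset.univ p.2]
                simp
      _ = ∑ t : C, ∑ s : C, ∑ u : D,
            (if a = T t then f1 t u else 0) * (if b = S s then f2 u s else 0) := by
          rw [Fintype.sum_prod_type]
          exact Finset.sum_congr rfl fun t _ => Finset.sum_comm
      _ = ∑ p : C × C, if a = T p.1 ∧ b = S p.2
            then (∑ u : D, f1 p.1 u * f2 u p.2) else 0 := by
          rw [Fintype.sum_prod_type]
          refine Finset.sum_congr rfl fun t _ => Finset.sum_congr rfl fun s _ => ?_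
          by_cases hc1 : a = T t <;> by_cases hc2 : b = S s <;>
            simp [hc1, hc2]
  calc ∑ a : A, ∑ b : A, (∑ w : W, F1 a w * F2 w b) ^ 2
      = ∑ ab : A × A, (∑ w : W, F1 ab.1 w * F2 w ab.2) ^ 2 :=
        (Fintype.sum_prod_type
          (f := fun ab : A × A => (∑ w : W, F1 ab.1 w * F2 w ab.2) ^ 2)).symm
    _ = ∑ ab : A × A, ∑ p : C × C,
          (if ab.1 = T p.1 ∧ ab.2 = S p.2 then (∑ u : D, f1 p.1 u * f2 u p.2) else 0)
            * (∑ w : W, F1 ab.1 w * F2 w ab.2) := by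
        refine Finset.sum_congr rfl fun ab _ => ?_
        rw [sq]
        nth_rewrite 1 [key ab.1 ab.2]
        rw [Finset.sum_mul]
    _ = ∑ p : C × C, ∑ ab : A × A,
          (if ab.1 = T p.1 ∧ ab.2 = S p.2 then (∑ u : D, f1 p.1 u * f2 u p.2) else 0)
            * (∑ w : W, F1 ab.1 w * F2 w ab.2) := Finset.sum_comm
    _ = ∑ p : C × C, (∑ u : D, f1 p.1 u * f2 u p.2)
          * (∑ w : W, F1 (T p.1) w * F2 w (S p.2)) := by
        refine Finset.sum_congr rfl fun p _ => ?_
        calc ∑ ab : A × A, (if ab.1 = T p.1 ∧ ab.2 = S p.2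
                then (∑ u : D, f1 p.1 u * f2 u p.2) else 0)
              * (∑ w : W, F1 ab.1 w * F2 w ab.2)
            = ∑ ab : A × A, if ab = (T p.1, S p.2) then
                (∑ u : D, f1 p.1 u * f2 u p.2) * (∑ w : W, F1 ab.1 w * F2 w ab.2)
              else 0 := by
              refine Finset.sum_congr rfl fun ab _ => ?_
              rw [ite_mul, zero_mul]
              refine if_congr ?_ rfl rfl
              rw [Prod.ext_iff]
          _ = _ := by
              rw [Finset.sum_ite_eq' Finset.univ (T p.1, S p.2)]
              simp
    _ = ∑ p : C × C, (∑ u : D, f1 p.1 u * f2 u p.2)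
          * (∑ u : D, f1 p.1 u * f2 u p.2) := by
        refine Finset.sum_congr rfl fun p _ => ?_
        congr 1
        rw [key (T p.1) (S p.2)]
        calc ∑ p' : C × C, (if T p.1 = T p'.1 ∧ S p.2 = S p'.2
                then (∑ u : D, f1 p'.1 u * f2 u p'.2) else 0)
            = ∑ p' : C × C, if p' = p then (∑ u : D, f1 p'.1 u * f2 u p'.2) else 0 := by
              refine Finset.sum_congr rfl fun p' _ => ?_
              refine if_congr ?_ rfl rfl
              rw [Prod.ext_iff]
              constructor
              · rintro ⟨ha, hb⟩; exact ⟨hT ha.symm, hS hb.symm⟩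
              · rintro ⟨ha, hb⟩; rw [ha, hb]; exact ⟨rfl, rfl⟩
          _ = _ := by
              rw [Finset.sum_ite_eq' Finset.univ p]
              simp
    _ = ∑ t : C, ∑ s : C, (∑ u : D, f1 t u * f2 u s) ^ 2 := by
        rw [Fintype.sum_prod_type]
        exact Finset.sum_congr rfl fun t _ =>
          Finset.sum_congr rfl fun s _ => (sq _).symm

end Stmt18

open Stmt18 in
/-- Proposition on contraction norms: for `k` as above (with `(e_i)` orthonormal, so
that the norm of an element of `H^{⊗p}` is the `ℓ²` norm of its coefficients, and
the contraction `k ⌢_r k` has coefficient `(a,b) ↦ Σ_w coeff(a++w)·coeff(rev w++b)`),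
for every `q = 1,…,d-1` and `r = h_1 + ⋯ + h_q`, one has
`‖k ⌢_r k‖_{H^{⊗(2m-2r)}} = ‖f ⌢_q f‖`. -/
theorem stmt18 (d N q m r : ℕ) (hd : 2 ≤ d) (h : Fin d → ℕ) (hpos : ∀ p, 1 ≤ h p)
    (hmh : ∀ p : Fin d, h p = h (Fin.rev p))
    (f : (Fin d → Fin N) → ℝ)
    (hmirror : ∀ v : Fin d → Fin N, f (v ∘ Fin.rev) = f v)
    (hvan : ∀ v : Fin d → Fin N, ¬ Function.Injective v → f v = 0)
    (hq1 : 1 ≤ q) (hq2 : q ≤ d - 1)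
    (hm : m = ∑ p : Fin d, h p)
    (hr : r = ∑ p ∈ Finset.univ.filter (fun p : Fin d => p.val < q), h p)
    (e1 : (m - r) + r = m) (e2 : r + (m - r) = m)
    (e3 : (d - q) + q = d) (e4 : q + (d - q) = d) :
    Real.sqrt (∑ a : Fin (m - r) → Fin N, ∑ b : Fin (m - r) → Fin N,
        (∑ w : Fin r → Fin N,
          coeffK h f (appFn e1 a w) * coeffK h f (appFn e2 (w ∘ Fin.rev) b)) ^ 2)
    = Real.sqrt (∑ t : Fin (d - q) → Fin N, ∑ s : Fin (d - q) → Fin N,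
        (∑ u : Fin q → Fin N,
          f (appFn e3 t u) * f (appFn e4 (u ∘ Fin.rev) s)) ^ 2) := by
  classical
  have hqd : q ≤ d := le_trans hq2 (Nat.sub_le d 1)
  -- splitting the total block sum at position `d - q` (resp. `q`)
  have sum3 : (∑ p : Fin (d - q), h (Fin.cast e3 (Fin.castAdd q p)))
      + (∑ p : Fin q, h (Fin.cast e3 (Fin.natAdd (d - q) p))) = m := by
    rw [hm, ← Fin.sum_congr' h e3, Fin.sum_univ_add]
  have sum4 : (∑ p : Fin q, h (Fin.cast e4 (Fin.castAdd (d - q) p)))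
      + (∑ p : Fin (d - q), h (Fin.cast e4 (Fin.natAdd q p))) = m := by
    rw [hm, ← Fin.sum_congr' h e4, Fin.sum_univ_add]
  have sumQ : (∑ p : Fin q, h (Fin.cast e4 (Fin.castAdd (d - q) p))) = r := by
    rw [hr]
    symm
    refine Finset.sum_bij' (fun (p : Fin d) hp => (⟨p.1, by simpa using hp⟩ : Fin q))
      (fun p _ => Fin.cast e4 (Fin.castAdd (d - q) p)) ?_ ?_ ?_ ?_ ?_
    · intro p hp; exact Finset.mem_univ _
    · intro p _
      simp only [Finset.mem_filter, Finset.mem_univ, true_and]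
      exact p.2
    · intro p hp; ext; rfl
    · intro p _; ext; rfl
    · intro p hp; rfl
  -- `h` on the last `q` blocks equals `h` on the first `q` blocks reversed
  have hRQ : ∀ p : Fin q, h (Fin.cast e3 (Fin.natAdd (d - q) p))
      = h (Fin.cast e4 (Fin.castAdd (d - q) (Fin.rev p))) := by
    intro p
    rw [hmh (Fin.cast e3 (Fin.natAdd (d - q) p))]
    congr 1
    have := p.2
    ext
    simp only [Fin.val_rev, Fin.coe_cast, Fin.coe_castAdd, Fin.coe_natAdd]
    omega
  have sumR : (∑ p : Fin q, h (Fin.cast e3 (Fin.natAdd (d - q) p))) = r := by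
    rw [← sumQ]
    calc (∑ p : Fin q, h (Fin.cast e3 (Fin.natAdd (d - q) p)))
        = ∑ p : Fin q, h (Fin.cast e4 (Fin.castAdd (d - q) (Fin.rev p))) :=
          Finset.sum_congr rfl fun p _ => hRQ p
      _ = ∑ p : Fin q, h (Fin.cast e4 (Fin.castAdd (d - q) p)) :=
          Fintype.sum_equiv Fin.revPerm _ _ (fun p => rfl)
  have sumL : (∑ p : Fin (d - q), h (Fin.cast e3 (Fin.castAdd q p))) = m - r := by
    omega
  have sumS : (∑ p : Fin (d - q), h (Fin.cast e4 (Fin.natAdd q p))) = m - r := by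
    omega
  -- length facts
  have lenWL : ∀ t : Fin (d - q) → Fin N,
      (tensorWord (fun p => h (Fin.cast e3 (Fin.castAdd q p))) t).length = m - r :=
    fun t => by rw [length_tensorWord, sumL]
  have lenWR : ∀ u : Fin q → Fin N,
      (tensorWord (fun p => h (Fin.cast e3 (Fin.natAdd (d - q) p))) u).length = r :=
    fun u => by rw [length_tensorWord, sumR]
  have lenWQ : ∀ u : Fin q → Fin N,
      (tensorWord (fun p => h (Fin.cast e4 (Fin.castAdd (d - q) p))) u).length = r :=
    fun u => by rw [length_tensorWord, sumQ]
  have lenWS : ∀ s : Fin (d - q) → Fin N,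
      (tensorWord (fun p => h (Fin.cast e4 (Fin.natAdd q p))) s).length = m - r :=
    fun s => by rw [length_tensorWord, sumS]
  -- the maps realizing words as index tuples
  set T : (Fin (d - q) → Fin N) → (Fin (m - r) → Fin N) :=
    fun t => fromList _ (lenWL t) with hT
  set U : (Fin q → Fin N) → (Fin r → Fin N) :=
    fun u => fromList _ (lenWR u) with hU
  set S : (Fin (d - q) → Fin N) → (Fin (m - r) → Fin N) :=
    fun s => fromList _ (lenWS s) with hS
  have hTofFn : ∀ t, List.ofFn (T t)
      = tensorWord (fun p => h (Fin.cast e3 (Fin.castAdd q p))) t :=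
    fun t => ofFn_fromList _ (lenWL t)
  have hUofFn : ∀ u, List.ofFn (U u)
      = tensorWord (fun p => h (Fin.cast e3 (Fin.natAdd (d - q) p))) u :=
    fun u => ofFn_fromList _ (lenWR u)
  have hSofFn : ∀ s, List.ofFn (S s)
      = tensorWord (fun p => h (Fin.cast e4 (Fin.natAdd q p))) s :=
    fun s => ofFn_fromList _ (lenWS s)
  have hTiff : ∀ (a : Fin (m - r) → Fin N) t,
      (List.ofFn a = tensorWord (fun p => h (Fin.cast e3 (Fin.castAdd q p))) t)
        ↔ a = T t := by
    intro a t
    rw [← hTofFn t]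
    exact ⟨fun hh => List.ofFn_injective hh, fun hh => by rw [hh]⟩
  have hUiff : ∀ (w : Fin r → Fin N) u,
      (List.ofFn w = tensorWord (fun p => h (Fin.cast e3 (Fin.natAdd (d - q) p))) u)
        ↔ w = U u := by
    intro w u
    rw [← hUofFn u]
    exact ⟨fun hh => List.ofFn_injective hh, fun hh => by rw [hh]⟩
  have hSiff : ∀ (b : Fin (m - r) → Fin N) s,
      (List.ofFn b = tensorWord (fun p => h (Fin.cast e4 (Fin.natAdd q p))) s)
        ↔ b = S s := by
    intro b s
    rw [← hSofFn s]
    exact ⟨fun hh => List.ofFn_injective hh, fun hh => by rw [hh]⟩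
  have hTinj : Function.Injective T := by
    intro t t' hh
    refine tensorWord_injective (fun p => h (Fin.cast e3 (Fin.castAdd q p)))
      (fun p => hpos _) (i := t) (j := t') ?_
    rw [← hTofFn t, ← hTofFn t', hh]
  have hSinj : Function.Injective S := by
    intro s s' hh
    refine tensorWord_injective (fun p => h (Fin.cast e4 (Fin.natAdd q p)))
      (fun p => hpos _) (i := s) (j := s') ?_
    rw [← hSofFn s, ← hSofFn s', hh]
  have hUinj : Function.Injective U := by
    intro u u' hh
    refine tensorWord_injective (fun p => h (Fin.cast e3 (Fin.natAdd (d - q) p)))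
      (fun p => hpos _) (i := u) (j := u') ?_
    rw [← hUofFn u, ← hUofFn u', hh]
  -- step 1 : expansion of the first coefficient
  have step1 : ∀ (a : Fin (m - r) → Fin N) (w : Fin r → Fin N),
      coeffK h f (appFn e1 a w)
        = ∑ p : (Fin (d - q) → Fin N) × (Fin q → Fin N),
            if a = T p.1 ∧ w = U p.2 then f (appFn e3 p.1 p.2) else 0 := by
    intro a w
    rw [coeffK_append h f e3 e1 lenWL a w]
    exact Finset.sum_congr rfl fun p _ =>
      if_congr (and_congr (hTiff a p.1) (hUiff w p.2)) rfl rfl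
  -- step 2 : expansion of the second coefficient
  have step2 : ∀ (w : Fin r → Fin N) (b : Fin (m - r) → Fin N),
      coeffK h f (appFn e2 (w ∘ Fin.rev) b)
        = ∑ p : (Fin q → Fin N) × (Fin (d - q) → Fin N),
            if w = U p.1 ∧ b = S p.2 then f (appFn e4 (p.1 ∘ Fin.rev) p.2) else 0 := by
    intro w b
    rw [coeffK_append h f e4 e2 lenWQ (w ∘ Fin.rev) b]
    rw [← Equiv.sum_comp (Equiv.prodCongr
      (Equiv.arrowCongr (Fin.revPerm (n := q)) (Equiv.refl (Fin N)))
      (Equiv.refl (Fin (d - q) → Fin N)))]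
    refine Finset.sum_congr rfl fun p _ => ?_
    have hfst : ((Equiv.prodCongr
        (Equiv.arrowCongr (Fin.revPerm (n := q)) (Equiv.refl (Fin N)))
        (Equiv.refl (Fin (d - q) → Fin N))) p).1 = p.1 ∘ Fin.rev := rfl
    have hsnd : ((Equiv.prodCongr
        (Equiv.arrowCongr (Fin.revPerm (n := q)) (Equiv.refl (Fin N)))
        (Equiv.refl (Fin (d - q) → Fin N))) p).2 = p.2 := rfl
    rw [hfst, hsnd]
    refine if_congr (and_congr ?_ (hSiff b p.2)) rfl rfl
    -- `ofFn (w ∘ rev) = WQ (u ∘ rev) ↔ w = U u`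
    rw [ofFn_comp_rev, List.reverse_eq_iff, tensorWord_reverse]
    have harg : (p.1 ∘ Fin.rev) ∘ Fin.rev = p.1 := by
      funext x; simp [Function.comp, Fin.rev_rev]
    have hblocks : ((fun x => h (Fin.cast e4 (Fin.castAdd (d - q) x))) ∘ Fin.rev)
        = fun x => h (Fin.cast e3 (Fin.natAdd (d - q) x)) := by
      funext x
      exact (hRQ x).symm
    rw [harg, hblocks]
    exact hUiff w p.1
  -- conclude via the abstract summation identity
  have main := abstract_sum T S U hTinj hSinj hUinj
    (fun a w => coeffK h f (appFn e1 a w))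
    (fun w b => coeffK h f (appFn e2 (w ∘ Fin.rev) b))
    (fun t u => f (appFn e3 t u))
    (fun u s => f (appFn e4 (u ∘ Fin.rev) s))
    step1 step2
  rw [main]
end
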